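/- The pair B, B* is a tridiagonal pair on V. Moreover the sequence bq^{2i−d} (0 ≤ i ≤ d) is a standard ordering of the eigenvalues of B, and the sequence b*q^{d−2i} (0 ≤ i ≤ d) is a standard ordering of the eigenvalues of B*. -/

import Mathlib

noncomputable section

open Submodule

variable {K : Type*} [Field K]

/-- `[n]_q = (q^n − q^{−n})/(q − q^{−1})`. -/
def qInt (q : K) (n : ℤ) : K := (q ^ n - q ^ (-n)) / (q - q⁻¹)

/-- Elements `y₀⁺, y₁⁺, y₀⁻, y₁⁻, k₀, k₀⁻¹, k₁, k₁⁻¹` of a unital associative `K`-algebra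
satisfy the alternate relations. -/
structure AlternateRelations (q : K) {A : Type*} [Ring A] [Algebra K A]
    (yp ym k kinv : Fin 2 → A) : Prop where
  k_kinv : ∀ i, k i * kinv i = 1
  kinv_k : ∀ i, kinv i * k i = 1
  central_yp : ∀ i, k 0 * k 1 * yp i = yp i * (k 0 * k 1)
  central_ym : ∀ i, k 0 * k 1 * ym i = ym i * (k 0 * k 1)
  central_k : ∀ i, k 0 * k 1 * k i = k i * (k 0 * k 1)
  central_kinv : ∀ i, k 0 * k 1 * kinv i = kinv i * (k 0 * k 1)
  rel_yp_k : ∀ i, (q - q⁻¹)⁻¹ • (q • (yp i * k i) - q⁻¹ • (k i * yp i)) = 1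
  rel_k_ym : ∀ i, (q - q⁻¹)⁻¹ • (q • (k i * ym i) - q⁻¹ • (ym i * k i)) = 1
  rel_ym_yp : ∀ i, (q - q⁻¹)⁻¹ • (q • (ym i * yp i) - q⁻¹ • (yp i * ym i)) = 1
  rel_yp_ym : ∀ i j, i ≠ j →
    (q - q⁻¹)⁻¹ • (q • (yp i * ym j) - q⁻¹ • (ym j * yp i)) = kinv 0 * kinv 1
  serre_p : ∀ i j, i ≠ j →
    yp i ^ 3 * yp j - qInt q 3 • (yp i ^ 2 * yp j * yp i)
      + qInt q 3 • (yp i * yp j * yp i ^ 2) - yp j * yp i ^ 3 = 0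
  serre_m : ∀ i j, i ≠ j →
    ym i ^ 3 * ym j - qInt q 3 • (ym i ^ 2 * ym j * ym i)
      + qInt q 3 • (ym i * ym j * ym i ^ 2) - ym j * ym i ^ 3 = 0

/-- Elements `e₀⁺, e₁⁺, e₀⁻, e₁⁻, K₀, K₀⁻¹, K₁, K₁⁻¹` of a unital associative `K`-algebra
satisfy the Chevalley relations of `U_q(sl₂ hat)`. -/
structure ChevalleyRelations (q : K) {A : Type*} [Ring A] [Algebra K A]
    (ep em Kg Kginv : Fin 2 → A) : Prop where
  K_Kinv : ∀ i, Kg i * Kginv i = 1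
  Kinv_K : ∀ i, Kginv i * Kg i = 1
  K_comm : Kg 0 * Kg 1 = Kg 1 * Kg 0
  KepK_same : ∀ i, Kg i * ep i * Kginv i = (q ^ (2 : ℤ)) • ep i
  KemK_same : ∀ i, Kg i * em i * Kginv i = (q ^ (-2 : ℤ)) • em i
  KepK_diff : ∀ i j, i ≠ j → Kg i * ep j * Kginv i = (q ^ (-2 : ℤ)) • ep j
  KemK_diff : ∀ i j, i ≠ j → Kg i * em j * Kginv i = (q ^ (2 : ℤ)) • em j
  e_comm_same : ∀ i, ep i * em i - em i * ep i = (q - q⁻¹)⁻¹ • (Kg i - Kginv i)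
  e_comm_diff : ∀ i j, i ≠ j → ep i * em j = em j * ep i
  serre_p : ∀ i j, i ≠ j →
    ep i ^ 3 * ep j - qInt q 3 • (ep i ^ 2 * ep j * ep i)
      + qInt q 3 • (ep i * ep j * ep i ^ 2) - ep j * ep i ^ 3 = 0
  serre_m : ∀ i j, i ≠ j →
    em i ^ 3 * em j - qInt q 3 • (em i ^ 2 * em j * em i)
      + qInt q 3 • (em i * em j * em i ^ 2) - em j * em i ^ 3 = 0

variable {V : Type*} [AddCommGroup V] [Module K V]

/-- A decomposition of `V` of length `d`: nonzero subspaces `U 0, …, U d`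
(indexed by `ℤ`, with `U i = ⊥` outside `[0, d]`) whose direct sum is `V`. -/
structure IsDecomposition (d : ℕ) (U : ℤ → Submodule K V) : Prop where
  bot_of_lt : ∀ i : ℤ, i < 0 → U i = ⊥
  bot_of_gt : ∀ i : ℤ, (d : ℤ) < i → U i = ⊥
  ne_bot : ∀ i : ℤ, 0 ≤ i → i ≤ (d : ℤ) → U i ≠ ⊥
  indep : iSupIndep U
  sup_eq_top : ⨆ i, U i = ⊤

/-- `A, A*` is a tridiagonal pair on `V` with standard orderings `Vs 0, …, Vs d` and
`Vs' 0, …, Vs' d` of the eigenspaces of `A` resp. `A*`, with corresponding eigenvalues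
`θ i` resp. `θ' i`. -/
structure IsTridiagonalPair (A A' : Module.End K V) (d : ℕ)
    (Vs Vs' : ℤ → Submodule K V) (θ θ' : ℤ → K) : Prop where
  decompV : IsDecomposition d Vs
  decompV' : IsDecomposition d Vs'
  eig : ∀ i : ℤ, ∀ v ∈ Vs i, A v = θ i • v
  eig' : ∀ i : ℤ, ∀ v ∈ Vs' i, A' v = θ' i • v
  theta_inj : ∀ i j : ℤ, 0 ≤ i → i ≤ (d : ℤ) → 0 ≤ j → j ≤ (d : ℤ) → θ i = θ j → i = j
  theta'_inj : ∀ i j : ℤ, 0 ≤ i → i ≤ (d : ℤ) → 0 ≤ j → j ≤ (d : ℤ) → θ' i = θ' j → i = j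
  trid : ∀ i : ℤ, (Vs i).map A' ≤ Vs (i - 1) ⊔ Vs i ⊔ Vs (i + 1)
  trid' : ∀ i : ℤ, (Vs' i).map A ≤ Vs' (i - 1) ⊔ Vs' i ⊔ Vs' (i + 1)
  irred : ∀ W : Submodule K V, W.map A ≤ W → W.map A' ≤ W → W = ⊥ ∨ W = ⊤

/-- The sum `U m + U (m+1) + ⋯ + U n`. -/
def sumIcc (U : ℤ → Submodule K V) (m n : ℤ) : Submodule K V :=
  ⨆ j ∈ Set.Icc m n, U j

/-- Decomposition `[0D]`: the `i`-th subspace is `V_i`. -/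
def dec0D (Vs : ℤ → Submodule K V) : ℤ → Submodule K V := Vs

/-- Decomposition `[0*D*]`: the `i`-th subspace is `V*_i`. -/
def dec0sDs (Vs' : ℤ → Submodule K V) : ℤ → Submodule K V := Vs'

/-- Decomposition `[0*D]`: the `i`-th subspace is `(V*_0+⋯+V*_i) ∩ (V_i+⋯+V_d)`. -/
def dec0sD (d : ℕ) (Vs Vs' : ℤ → Submodule K V) (i : ℤ) : Submodule K V :=
  sumIcc Vs' 0 i ⊓ sumIcc Vs i (d : ℤ)

/-- Decomposition `[0*0]`: the `i`-th subspace is `(V*_0+⋯+V*_i) ∩ (V_0+⋯+V_{d−i})`. -/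
def dec0s0 (d : ℕ) (Vs Vs' : ℤ → Submodule K V) (i : ℤ) : Submodule K V :=
  sumIcc Vs' 0 i ⊓ sumIcc Vs 0 ((d : ℤ) - i)

/-- Decomposition `[D*0]`: the `i`-th subspace is `(V*_{d−i}+⋯+V*_d) ∩ (V_0+⋯+V_{d−i})`. -/
def decDs0 (d : ℕ) (Vs Vs' : ℤ → Submodule K V) (i : ℤ) : Submodule K V :=
  sumIcc Vs' ((d : ℤ) - i) (d : ℤ) ⊓ sumIcc Vs 0 ((d : ℤ) - i)

/-- Decomposition `[D*D]`: the `i`-th subspace is `(V*_{d−i}+⋯+V*_d) ∩ (V_i+⋯+V_d)`. -/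
def decDsD (d : ℕ) (Vs Vs' : ℤ → Submodule K V) (i : ℤ) : Submodule K V :=
  sumIcc Vs' ((d : ℤ) - i) (d : ℤ) ⊓ sumIcc Vs i (d : ℤ)


/-!
The flags `V*_0 + ⋯ + V*_i`, `V_0 + ⋯ + V_{d-i}` (and `V*_{d-i} + ⋯ + V*_d`, `V_i + ⋯ + V_d`)
are lowered by `A* - θ*` and raised by `A`, resp. raised by `A - θ` and lowered by `A*`;
irreducibility of `A, A*` makes their pieces `[0*0]` and `[D*D]` split decompositions of `V`.
Since `B` (resp. `B*`) is diagonal on a split decomposition on which `A` and `A*` shift the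
index by one, comparing eigenvalues gives q-commutation relations such as
`q B A* - q⁻¹ A* B = (q - q⁻¹) a* b`. A q-commutation relation moves eigenspaces by one step, so
`B V_j ⊆ V_{j-1} + V_j`, `B V*_j ⊆ V*_{j-1} + V*_j`, `B* V_j ⊆ V_j + V_{j+1}` and
`B* V*_j ⊆ V*_j + V*_{j+1}`. Thus `B*` moves both flags defining `[0*0]` by at most one step,
which is tridiagonality of `B*` on the eigenspaces of `B`, and symmetrically for `B` on `[D*D]`.

For irreducibility, a subspace `W` invariant under `B` and `B*` is the sum of its intersections
with the eigenspaces of each. Now `V_0 + ⋯ + V_l` and `V*_0 + ⋯ + V*_{d-l-1}` are complementary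
sums of eigenspaces of `B`, while `V_{l+1} + ⋯ + V_d` and `V*_{d-l} + ⋯ + V*_d` are complementary
sums of eigenspaces of `B*`; counting dimensions shows
`W = W ∩ (V_0 + ⋯ + V_l) + W ∩ (V_{l+1} + ⋯ + V_d)` for every `l`, so `W` is `A`-invariant, and
likewise `A*`-invariant.
-/

section SumIcc

variable {U : ℤ → Submodule K V}

lemma le_sumIcc {m n j : ℤ} (hm : m ≤ j) (hn : j ≤ n) : U j ≤ sumIcc U m n :=
  le_biSup U ⟨hm, hn⟩

lemma sumIcc_le {m n : ℤ} {P : Submodule K V} (h : ∀ j, m ≤ j → j ≤ n → U j ≤ P) :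
    sumIcc U m n ≤ P :=
  iSup₂_le fun j hj => h j hj.1 hj.2

lemma sumIcc_mono {m n m' n' : ℤ} (hm : m ≤ m') (hn : n' ≤ n) :
    sumIcc U m' n' ≤ sumIcc U m n :=
  sumIcc_le fun _ hj₁ hj₂ => le_sumIcc (hm.trans hj₁) (hj₂.trans hn)

lemma sumIcc_eq_bot_of_lt {m n : ℤ} (h : n < m) : sumIcc U m n = ⊥ :=
  le_bot_iff.mp <| sumIcc_le fun _ hj₁ hj₂ => absurd (hj₁.trans hj₂) h.not_ge

lemma sumIcc_self (j : ℤ) : sumIcc U j j = U j :=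
  le_antisymm (sumIcc_le fun _ h₁ h₂ => (le_antisymm h₂ h₁) ▸ le_rfl)
    (le_sumIcc le_rfl le_rfl)

lemma sumIcc_le_sup {m n k : ℤ} : sumIcc U m n ≤ sumIcc U m k ⊔ sumIcc U (k + 1) n :=
  sumIcc_le fun j hj₁ hj₂ => (le_or_gt j k).elim
    (fun h => le_sup_of_le_left (le_sumIcc hj₁ h))
    (fun h => le_sup_of_le_right (le_sumIcc h hj₂))

lemma map_sumIcc_le {f : Module.End K V} {m n : ℤ} {P : Submodule K V}
    (h : ∀ j, m ≤ j → j ≤ n → (U j).map f ≤ P) : (sumIcc U m n).map f ≤ P :=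
  Submodule.map_le_iff_le_comap.mpr <| sumIcc_le fun j hj₁ hj₂ =>
    Submodule.map_le_iff_le_comap.mp (h j hj₁ hj₂)

end SumIcc

namespace IsDecomposition

variable {U : ℤ → Submodule K V} {d : ℕ} (hU : IsDecomposition d U)
include hU

lemma eq_bot_of_lt_or_lt {i : ℤ} (hi : i < 0 ∨ (d : ℤ) < i) : U i = ⊥ :=
  hi.elim (hU.bot_of_lt i) (hU.bot_of_gt i)

lemma le_sumIcc {i m n : ℤ} (hi : (m ≤ i ∧ i ≤ n) ∨ i < 0 ∨ (d : ℤ) < i) :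
    U i ≤ sumIcc U m n := by
  rcases hi with hi | hi
  · exact _root_.le_sumIcc hi.1 hi.2
  · rw [hU.eq_bot_of_lt_or_lt hi]; exact bot_le

lemma apply_eq_smul {f : Module.End K V} {β : ℤ → K}
    (h : ∀ i : ℤ, 0 ≤ i → i ≤ (d : ℤ) → ∀ v ∈ U i, f v = β i • v) :
    ∀ i : ℤ, ∀ v ∈ U i, f v = β i • v := by
  intro i v hv
  by_cases hi : 0 ≤ i ∧ i ≤ (d : ℤ)
  · exact h i hi.1 hi.2 v hv
  · rw [hU.eq_bot_of_lt_or_lt (by omega), Submodule.mem_bot] at hv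
    simp [hv]

lemma sumIcc_eq_top {m n : ℤ} (hm : m ≤ 0) (hn : (d : ℤ) ≤ n) : sumIcc U m n = ⊤ :=
  top_le_iff.mp <| hU.sup_eq_top ▸ iSup_le fun _ => hU.le_sumIcc (by omega)

lemma disjoint_sumIcc {m n m' n' : ℤ} (h : n < m') :
    Disjoint (sumIcc U m n) (sumIcc U m' n') :=
  hU.indep.disjoint_biSup_biSup <| Set.disjoint_left.mpr fun _ h₁ h₂ => by
    simp only [Set.mem_Icc] at h₁ h₂; omega

lemma sumIcc_inf_sumIcc_le {m n k : ℤ} (hn : n ≤ k) :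
    sumIcc U m n ⊓ sumIcc U n k ≤ U n := by
  calc sumIcc U m n ⊓ sumIcc U n k
      ≤ (U n ⊔ sumIcc U m (n - 1)) ⊓ sumIcc U n k := by
        gcongr
        rw [sup_comm, ← sumIcc_self (U := U) n]
        simpa using sumIcc_le_sup (U := U) (m := m) (n := n) (k := n - 1)
    _ = U n := by
        rw [sup_inf_assoc_of_le _ (_root_.le_sumIcc le_rfl hn),
          (hU.disjoint_sumIcc (by omega)).eq_bot, sup_bot_eq]

lemma sumIcc_pred_ne {i : ℤ} (h₀ : 0 ≤ i) (hd : i ≤ (d : ℤ)) :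
    sumIcc U 0 (i - 1) ≠ sumIcc U 0 i := fun h => hU.ne_bot i h₀ hd <| by
  have hle : U i ≤ sumIcc U 0 (i - 1) := h ▸ _root_.le_sumIcc h₀ le_rfl
  have hdisj := hU.disjoint_sumIcc (m := 0) (m' := i) (n' := i) (sub_one_lt i)
  rw [sumIcc_self] at hdisj
  exact le_bot_iff.mp (hdisj hle le_rfl)

lemma sumIcc_succ_ne {i : ℤ} (h₀ : 0 ≤ i) (hd : i ≤ (d : ℤ)) :
    sumIcc U (i + 1) d ≠ sumIcc U i d := fun h => hU.ne_bot i h₀ hd <| by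
  have hle : U i ≤ sumIcc U (i + 1) d := h ▸ _root_.le_sumIcc le_rfl hd
  have hdisj := hU.disjoint_sumIcc (m := i) (n := i) (m' := i + 1) (n' := d) (lt_add_one i)
  rw [sumIcc_self] at hdisj
  exact le_bot_iff.mp (hdisj le_rfl hle)

lemma map_sumIcc_le_of_tridiagonal {f : Module.End K V}
    (hf : ∀ i, (U i).map f ≤ U (i - 1) ⊔ U i ⊔ U (i + 1)) {m n m' n' : ℤ}
    (hm : m' ≤ m - 1 ∨ m' ≤ 0) (hn : n + 1 ≤ n' ∨ (d : ℤ) ≤ n') :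
    (sumIcc U m n).map f ≤ sumIcc U m' n' :=
  map_sumIcc_le fun j _ _ => (hf j).trans <|
    sup_le (sup_le (hU.le_sumIcc (by omega)) (hU.le_sumIcc (by omega))) (hU.le_sumIcc (by omega))

lemma le_inf_sumIcc_sup {W : Submodule K V} (hW : W ≤ ⨆ i, W ⊓ U i) (m : ℤ) :
    W ≤ W ⊓ sumIcc U 0 m ⊔ W ⊓ sumIcc U (m + 1) d :=
  hW.trans <| iSup_le fun i => (le_or_gt i m).elim
    (fun hi => le_sup_of_le_left (inf_le_inf_left W (hU.le_sumIcc (by omega))))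
    (fun hi => le_sup_of_le_right (inf_le_inf_left W (hU.le_sumIcc (by omega))))

lemma le_iSup_inf {W : Submodule K V}
    (hW : ∀ m : ℤ, 0 ≤ m → m < d →
      W ≤ W ⊓ sumIcc U 0 m ⊔ W ⊓ sumIcc U (m + 1) d) :
    W ≤ ⨆ i, W ⊓ U i := by
  have key (l : ℤ) (hl : 0 ≤ l) : l ≤ d → W ⊓ sumIcc U 0 l ≤ ⨆ i, W ⊓ U i := by
    induction l, hl using Int.leInduction with
    | base => intro; rw [sumIcc_self]; exact le_iSup (fun i => W ⊓ U i) 0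
    | succ l hl ih =>
      rintro hld w ⟨hwW, hw⟩
      obtain ⟨p, hp, r, hr, rfl⟩ := Submodule.mem_sup.mp (hW l hl (by omega) hwW)
      have hr' : r ∈ sumIcc U 0 (l + 1) := by
        simpa using sub_mem hw (sumIcc_mono le_rfl (by omega) hp.2)
      exact add_mem (ih (by omega) hp)
        (le_iSup (fun i => W ⊓ U i) (l + 1)
          ⟨hr.1, hU.sumIcc_inf_sumIcc_le hld ⟨hr', hr.2⟩⟩)
  simpa [hU.sumIcc_eq_top le_rfl le_rfl] using key d (by omega) le_rfl

end IsDecomposition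

section Eigen

variable {f : Module.End K V}

lemma sub_smul_mem_sumIcc_pred {U : ℤ → Submodule K V} {β : ℤ → K}
    (hf : ∀ i, ∀ v ∈ U i, f v = β i • v) {m n : ℤ} {v : V} (hv : v ∈ sumIcc U m n) :
    f v - β n • v ∈ sumIcc U m (n - 1) := by
  suffices sumIcc U m n ≤ (sumIcc U m (n - 1)).comap (f - β n • 1) by simpa using this hv
  refine sumIcc_le fun j hj₁ hj₂ w hw => ?_
  rcases hj₂.eq_or_lt with rfl | hlt
  · simp [hf j w hw]
  · simpa [hf j w hw, ← sub_smul] using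
      Submodule.smul_mem _ (β j - β n) (le_sumIcc hj₁ (Int.le_sub_one_of_lt hlt) hw)

lemma sub_smul_mem_sumIcc_succ {U : ℤ → Submodule K V} {β : ℤ → K}
    (hf : ∀ i, ∀ v ∈ U i, f v = β i • v) {m n : ℤ} {v : V} (hv : v ∈ sumIcc U m n) :
    f v - β m • v ∈ sumIcc U (m + 1) n := by
  suffices sumIcc U m n ≤ (sumIcc U (m + 1) n).comap (f - β m • 1) by simpa using this hv
  refine sumIcc_le fun j hj₁ hj₂ w hw => ?_
  rcases hj₁.eq_or_lt with rfl | hlt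
  · simp [hf m w hw]
  · simpa [hf j w hw, ← sub_smul] using
      Submodule.smul_mem _ (β j - β m) (le_sumIcc (Int.add_one_le_of_lt hlt) hj₂ hw)

lemma map_le_sup_of_sub_smul_mem {P Q : Submodule K V} (c : K)
    (h : ∀ v ∈ P, f v - c • v ∈ Q) : P.map f ≤ Q ⊔ P := by
  rintro _ ⟨v, hv, rfl⟩
  simpa using add_mem (Submodule.mem_sup_left (h v hv)) (Submodule.mem_sup_right (P.smul_mem c hv))

lemma iSup_eq_bot_or_eq_top_of_sub_smul_mem {S T : Module.End K V}
    (hST : ∀ W : Submodule K V, W.map S ≤ W → W.map T ≤ W → W = ⊥ ∨ W = ⊤)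
    {Z : ℤ → Submodule K V} {σ τ : ℤ → K}
    (hS : ∀ j, ∀ v ∈ Z j, S v - σ j • v ∈ Z (j - 1))
    (hT : ∀ j, ∀ v ∈ Z j, T v - τ j • v ∈ Z (j + 1)) :
    ⨆ j, Z j = ⊥ ∨ ⨆ j, Z j = ⊤ := by
  refine hST _ ?_ ?_ <;> rw [Submodule.map_iSup] <;> refine iSup_le fun j => ?_
  · exact (map_le_sup_of_sub_smul_mem _ (hS j)).trans (sup_le (le_iSup Z _) (le_iSup Z _))
  · exact (map_le_sup_of_sub_smul_mem _ (hT j)).trans (sup_le (le_iSup Z _) (le_iSup Z _))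

variable {ι : Type*} {U : ι → Submodule K V} {β : ι → K}

lemma eigenspace_eq_iSup (hU : iSup U = ⊤) (hf : ∀ i, ∀ v ∈ U i, f v = β i • v)
    (μ : K) :
    f.eigenspace μ = ⨆ (i) (_ : β i = μ), U i := by
  have hle : (fun μ => ⨆ (i) (_ : β i = μ), U i) ≤ f.eigenspace := fun μ =>
    iSup₂_le fun i hi v hv => Module.End.mem_eigenspace_iff.mpr (hi ▸ hf i v hv)
  have htop : ⨆ μ, ⨆ (i) (_ : β i = μ), U i = ⊤ := by
    rw [iSup_comm]; simpa using hU
  exact congrFun ((f.eigenspaces_iSupIndep.le_iff_eq_of_iSup_eq_top htop).mp hle).symm μ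

lemma eigenspace_eq_of_injective (hU : iSup U = ⊤) (hβ : Function.Injective β)
    (hf : ∀ i, ∀ v ∈ U i, f v = β i • v) (i : ι) : f.eigenspace (β i) = U i := by
  simp [eigenspace_eq_iSup hU hf, hβ.eq_iff]

lemma mem_eigenspace_sup_of_sub_smul_mem {w : V} {μ ν : K} (hμν : μ ≠ ν)
    (hw : f w - ν • w ∈ f.eigenspace μ) : w ∈ f.eigenspace μ ⊔ f.eigenspace ν := by
  set u := (μ - ν)⁻¹ • (f w - ν • w)
  have hu : u ∈ f.eigenspace μ := Submodule.smul_mem _ _ hw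
  have hwu : w - u ∈ f.eigenspace ν := by
    have hmul : (μ - ν) • u = f w - ν • w := by simp [u, smul_smul, sub_ne_zero.mpr hμν]
    rw [Module.End.mem_eigenspace_iff] at hu ⊢
    rw [map_sub, hu]
    linear_combination (norm := module) -hmul
  simpa using add_mem (Submodule.mem_sup_left hu) (Submodule.mem_sup_right hwu)

lemma map_eigenspace_le_of_comm {E F : Module.End K V} {x y c μ ν : K}
    (hcomm : x • (E * F) - y • (F * E) = c • 1) (hy : y ≠ 0) (hν : y * ν = x * μ)
    (hμν : μ ≠ ν) : (F.eigenspace μ).map E ≤ F.eigenspace μ ⊔ F.eigenspace ν := by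
  rintro _ ⟨v, hv, rfl⟩
  refine mem_eigenspace_sup_of_sub_smul_mem hμν ?_
  have hFv : F v = μ • v := Module.End.mem_eigenspace_iff.mp hv
  have hvc : x • E (F v) - y • F (E v) = c • v := by simpa using congr($hcomm v)
  have : F (E v) - ν • E v = (-(y⁻¹ * c)) • v := by
    apply smul_right_injective V hy
    rw [hFv, map_smul] at hvc
    simp only [smul_sub, smul_smul, hν, mul_neg, ← mul_assoc, mul_inv_cancel₀ hy, one_mul]
    linear_combination (norm := module) -hvc
  rw [this]
  exact Submodule.smul_mem _ _ hv

lemma comm_eq_smul_one {U : ℤ → Submodule K V} {E F : Module.End K V} {β τ : ℤ → K}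
    {e : ℤ} {x y c : K} (hU : iSup U = ⊤) (hE : ∀ i, ∀ v ∈ U i, E v = β i • v)
    (hF : ∀ i, ∀ v ∈ U i, F v - τ i • v ∈ U (i + e))
    (hc : ∀ i, (x - y) * (β i * τ i) = c) (hxy : ∀ i, x * β (i + e) = y * β i) :
    x • (E * F) - y • (F * E) = c • 1 := by
  refine sub_eq_zero.mp (LinearMap.ker_eq_top.mp (top_le_iff.mp (hU ▸ iSup_le fun i v hv => ?_)))
  obtain ⟨w, hw, hFv⟩ : ∃ w ∈ U (i + e), F v = τ i • v + w := ⟨_, hF i v hv, by abel⟩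
  simp only [LinearMap.mem_ker, LinearMap.sub_apply, LinearMap.smul_apply, Module.End.mul_apply,
    Module.End.one_apply, hE i v hv, map_smul, hFv, map_add, hE _ w hw]
  linear_combination (norm := module) (hc i) • v + (hxy i) • w

lemma map_le_of_le_iSup_inf (hf : ∀ i, ∀ v ∈ U i, f v = β i • v) {W : Submodule K V}
    (hW : W ≤ ⨆ i, W ⊓ U i) : W.map f ≤ W := by
  refine (Submodule.map_mono hW).trans ?_
  rw [Submodule.map_iSup]
  refine iSup_le fun i => ?_
  rintro _ ⟨v, hv, rfl⟩
  rw [hf i v hv.2]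
  exact W.smul_mem _ hv.1

lemma le_iSup_inf_of_map_le [FiniteDimensional K V] (hU : iSup U = ⊤)
    (hβ : Function.Injective β) (hf : ∀ i, ∀ v ∈ U i, f v = β i • v) {W : Submodule K V}
    (hW : W.map f ≤ W) :
    W ≤ ⨆ i, W ⊓ U i := by
  have htop : ⨆ μ, f.eigenspace μ = ⊤ := by
    simp_rw [eigenspace_eq_iSup hU hf]; rw [iSup_comm]; simpa using hU
  calc W = W ⊓ ⨆ μ, f.eigenspace μ := by rw [htop, inf_top_eq]
    _ = ⨆ μ, W ⊓ f.eigenspace μ :=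
        Submodule.inf_iSup_genEigenspace (fun w hw => hW ⟨w, hw, rfl⟩) 1
    _ ≤ ⨆ i, W ⊓ U i := iSup_le fun μ => by
        by_cases hμ : ∃ i, β i = μ
        · obtain ⟨i, rfl⟩ := hμ
          rw [eigenspace_eq_of_injective hU hβ hf]
          exact le_iSup (fun i => W ⊓ U i) i
        · push Not at hμ
          simp [eigenspace_eq_iSup hU hf, hμ]

end Eigen

lemma le_inf_sup_inf_of_disjoint [FiniteDimensional K V] {W M₁ M₂ N₁ N₂ : Submodule K V}
    (hM : W ≤ W ⊓ M₁ ⊔ W ⊓ M₂) (hN : W ≤ W ⊓ N₁ ⊔ W ⊓ N₂)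
    (h₁ : Disjoint M₁ N₂) (h₂ : Disjoint M₂ N₁) : W ≤ W ⊓ M₁ ⊔ W ⊓ N₂ := by
  have hsum {P Q : Submodule K V} (hPQ : Disjoint P Q) :
      Module.finrank K ↥(W ⊓ P ⊔ W ⊓ Q) =
        Module.finrank K ↥(W ⊓ P) + Module.finrank K ↥(W ⊓ Q) := by
    have := Submodule.finrank_sup_add_finrank_inf_eq (W ⊓ P) (W ⊓ Q)
    rwa [(hPQ.mono inf_le_right inf_le_right).eq_bot, finrank_bot, add_zero] at this
  have hle (P Q : Submodule K V) : W ⊓ P ⊔ W ⊓ Q ≤ W := sup_le inf_le_left inf_le_left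
  have hM' := (Submodule.finrank_mono hM).trans (Submodule.finrank_add_le_finrank_add_finrank _ _)
  have hN' := (Submodule.finrank_mono hN).trans (Submodule.finrank_add_le_finrank_add_finrank _ _)
  have h₁' := hsum h₁ ▸ Submodule.finrank_mono (hle M₁ N₂)
  have h₂' := hsum h₂ ▸ Submodule.finrank_mono (hle M₂ N₁)
  refine (Submodule.eq_of_le_of_finrank_le (hle M₁ N₂) ?_).ge
  rw [hsum h₁]
  -- the four dimension inequalities add up to an equality
  omega

section SplitFlags

variable (S T : Module.End K V) (σ τ : ℤ → K) (d : ℕ) (X Y : ℤ → Submodule K V)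

/-- Opposite flags for a pair `S, T` without common invariant subspaces; their pieces
`X i ⊓ Y i` form the split decomposition of `V`. -/
structure IsSplitFlags : Prop where
  irreducible : ∀ W : Submodule K V, W.map S ≤ W → W.map T ≤ W → W = ⊥ ∨ W = ⊤
  monotone : Monotone X
  antitone : Antitone Y
  X_neg_one : X (-1) = ⊥
  Y_zero : Y 0 = ⊤
  Y_d_add_one : Y (d + 1) = ⊥
  Y_one_ne_top : Y 1 ≠ ⊤
  X_pred_ne : ∀ i : ℤ, 0 ≤ i → i ≤ (d : ℤ) → X (i - 1) ≠ X i
  sub_smul_mem_X : ∀ i, ∀ v ∈ X i, S v - σ i • v ∈ X (i - 1)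
  map_X : ∀ i, (X i).map T ≤ X (i + 1)
  sub_smul_mem_Y : ∀ i, ∀ v ∈ Y i, T v - τ i • v ∈ Y (i + 1)
  map_Y : ∀ i, (Y i).map S ≤ Y (i - 1)

namespace IsSplitFlags

variable {S T σ τ d X Y} (h : IsSplitFlags S T σ τ d X Y)
include h

lemma X_eq_bot {i : ℤ} (hi : i < 0) : X i = ⊥ :=
  le_bot_iff.mp (h.X_neg_one ▸ h.monotone (by omega : i ≤ -1))

lemma Y_eq_bot {i : ℤ} (hi : (d : ℤ) < i) : Y i = ⊥ :=
  le_bot_iff.mp (h.Y_d_add_one ▸ h.antitone (by omega : (d : ℤ) + 1 ≤ i))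

lemma sub_smul_mem_inf_pred {i : ℤ} {v : V} (hv : v ∈ X i ⊓ Y i) :
    S v - σ i • v ∈ X (i - 1) ⊓ Y (i - 1) :=
  ⟨h.sub_smul_mem_X i v hv.1, sub_mem (h.map_Y i ⟨v, hv.2, rfl⟩)
    ((Y (i - 1)).smul_mem _ (h.antitone (sub_one_lt i).le hv.2))⟩

lemma sub_smul_mem_inf_succ {i : ℤ} {v : V} (hv : v ∈ X i ⊓ Y i) :
    T v - τ i • v ∈ X (i + 1) ⊓ Y (i + 1) :=
  ⟨sub_mem (h.map_X i ⟨v, hv.1, rfl⟩)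
    ((X (i + 1)).smul_mem _ (h.monotone (lt_add_one i).le hv.1)), h.sub_smul_mem_Y i v hv.2⟩

lemma inf_eq_bot (i : ℤ) : X (i - 1) ⊓ Y i = ⊥ := by
  have hW : ⨆ j, X (j - 1) ⊓ Y j ≤ Y 1 := iSup_le fun j => by
    rcases le_or_gt j 0 with hj | hj
    · simp [h.X_eq_bot (by omega : j - 1 < 0)]
    · exact inf_le_right.trans (h.antitone (by omega : (1 : ℤ) ≤ j))
  have hS (j : ℤ) (v : V) (hv : v ∈ X (j - 1) ⊓ Y j) :
      S v - σ (j - 1) • v ∈ X (j - 1 - 1) ⊓ Y (j - 1) :=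
    ⟨h.sub_smul_mem_X _ v hv.1, sub_mem (h.map_Y j ⟨v, hv.2, rfl⟩)
      ((Y (j - 1)).smul_mem _ (h.antitone (sub_one_lt j).le hv.2))⟩
  have hT (j : ℤ) (v : V) (hv : v ∈ X (j - 1) ⊓ Y j) :
      T v - τ j • v ∈ X (j + 1 - 1) ⊓ Y (j + 1) := by
    rw [add_sub_cancel_right]
    exact ⟨sub_mem (by simpa using h.map_X (j - 1) ⟨v, hv.1, rfl⟩)
      ((X j).smul_mem _ (h.monotone (sub_one_lt j).le hv.1)), h.sub_smul_mem_Y j v hv.2⟩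
  rcases iSup_eq_bot_or_eq_top_of_sub_smul_mem h.irreducible hS hT with hbot | htop
  · exact le_bot_iff.mp (hbot ▸ le_iSup (fun j => X (j - 1) ⊓ Y j) i)
  · exact absurd (top_le_iff.mp (htop ▸ hW)) h.Y_one_ne_top

lemma iSup_inf_eq_top : ⨆ i, X i ⊓ Y i = ⊤ := by
  refine (iSup_eq_bot_or_eq_top_of_sub_smul_mem h.irreducible (fun _ _ => h.sub_smul_mem_inf_pred)
    (fun _ _ => h.sub_smul_mem_inf_succ)).resolve_left fun hbot => ?_
  refine h.X_pred_ne 0 le_rfl (by omega) ?_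
  rw [zero_sub, h.X_neg_one, eq_comm, ← le_bot_iff, ← hbot]
  simpa [h.Y_zero] using le_iSup (fun j => X j ⊓ Y j) 0

lemma sumIcc_zero_eq_X (i : ℤ) : sumIcc (fun j => X j ⊓ Y j) 0 i = X i := by
  refine eq_of_le_of_inf_le_of_le_sup (z := Y (i + 1))
    (sumIcc_le fun j _ hj => inf_le_left.trans (h.monotone hj)) ?_ ?_
  · have := h.inf_eq_bot (i + 1)
    rw [add_sub_cancel_right] at this
    exact this.le.trans bot_le
  · refine le_top.trans (h.iSup_inf_eq_top ▸ iSup_le fun j => ?_)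
    rcases lt_or_ge j 0 with hj | hj
    · simp [h.X_eq_bot hj]
    rcases le_or_gt j i with hji | hji
    · exact le_sup_of_le_left (le_sumIcc (U := fun j => X j ⊓ Y j) hj hji)
    · exact le_sup_of_le_right (inf_le_right.trans (h.antitone (by omega)))

lemma sumIcc_d_eq_Y (i : ℤ) : sumIcc (fun j => X j ⊓ Y j) i d = Y i := by
  refine eq_of_le_of_inf_le_of_le_sup (z := X (i - 1))
    (sumIcc_le fun j hj _ => inf_le_right.trans (h.antitone hj)) ?_ ?_
  · rw [inf_comm, h.inf_eq_bot]; exact bot_le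
  · refine le_top.trans (h.iSup_inf_eq_top ▸ iSup_le fun j => ?_)
    rcases lt_or_ge (d : ℤ) j with hj | hj
    · simp [h.Y_eq_bot hj]
    rcases le_or_gt i j with hij | hij
    · exact le_sup_of_le_left (le_sumIcc (U := fun j => X j ⊓ Y j) hij hj)
    · exact le_sup_of_le_right (inf_le_left.trans (h.monotone (by omega)))

lemma isDecomposition : IsDecomposition d (fun i => X i ⊓ Y i) where
  bot_of_lt i hi := by simp [h.X_eq_bot hi]
  bot_of_gt i hi := by simp [h.Y_eq_bot hi]
  ne_bot i h₀ hd hbot := h.X_pred_ne i h₀ hd <| by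
    refine le_antisymm (h.monotone (sub_one_lt i).le) ?_
    rw [← h.sumIcc_zero_eq_X, ← h.sumIcc_zero_eq_X]
    refine sumIcc_le_sup.trans (sup_le le_rfl ?_)
    rw [sub_add_cancel, sumIcc_self]
    exact hbot.le.trans bot_le
  indep i := by
    rw [disjoint_iff, ← le_bot_iff]
    have hrest : ⨆ (j) (_ : j ≠ i), X j ⊓ Y j ≤ X (i - 1) ⊔ Y (i + 1) :=
      iSup₂_le fun j hj => (lt_or_gt_of_ne hj).elim
        (fun hlt => le_sup_of_le_left (inf_le_left.trans (h.monotone (by omega))))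
        (fun hgt => le_sup_of_le_right (inf_le_right.trans (h.antitone (by omega))))
    calc X i ⊓ Y i ⊓ ⨆ (j) (_ : j ≠ i), X j ⊓ Y j
        ≤ Y i ⊓ (X i ⊓ (X (i - 1) ⊔ Y (i + 1))) := by
          rw [inf_comm (X i), inf_assoc]; gcongr
      _ = Y i ⊓ X (i - 1) := by
          have := h.inf_eq_bot (i + 1)
          rw [add_sub_cancel_right] at this
          rw [sup_comm, ← inf_sup_assoc_of_le _ (h.monotone (sub_one_lt i).le), this, bot_sup_eq]
      _ = ⊥ := by rw [inf_comm, h.inf_eq_bot]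
  sup_eq_top := h.iSup_inf_eq_top

lemma map_inf_le_sup_of_map_le {f : Module.End K V} (hX : ∀ i, (X i).map f ≤ X (i + 1))
    (hY : ∀ i, (Y i).map f ≤ Y (i - 1)) (i : ℤ) :
    (X i ⊓ Y i).map f ≤
      X (i - 1) ⊓ Y (i - 1) ⊔ X i ⊓ Y i ⊔ X (i + 1) ⊓ Y (i + 1) := by
  have hM : sumIcc (fun j => X j ⊓ Y j) (i - 1) (i + 1) ≤ Y (i - 1) :=
    h.sumIcc_d_eq_Y (i - 1) ▸ sumIcc_le fun j _ _ => h.isDecomposition.le_sumIcc (by omega)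
  calc (X i ⊓ Y i).map f
      ≤ X (i + 1) ⊓ Y (i - 1) := (Submodule.map_inf_le f).trans (inf_le_inf (hX i) (hY i))
    _ ≤ (sumIcc (fun j => X j ⊓ Y j) (i - 1) (i + 1) ⊔ X (i - 1 - 1)) ⊓ Y (i - 1) := by
        gcongr
        rw [← h.sumIcc_zero_eq_X (i + 1), ← h.sumIcc_zero_eq_X (i - 1 - 1), sup_comm]
        exact (sumIcc_le_sup (k := i - 1 - 1)).trans (by rw [sub_add_cancel])
    _ = sumIcc (fun j => X j ⊓ Y j) (i - 1) (i + 1) := by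
        rw [sup_inf_assoc_of_le _ hM, h.inf_eq_bot, sup_bot_eq]
    _ ≤ X (i - 1) ⊓ Y (i - 1) ⊔ X i ⊓ Y i ⊔ X (i + 1) ⊓ Y (i + 1) :=
      sumIcc_le fun j hj₁ hj₂ => by
        rcases (by omega : j = i - 1 ∨ j = i ∨ j = i + 1) with rfl | rfl | rfl
        · exact le_sup_of_le_left le_sup_left
        · exact le_sup_of_le_left le_sup_right
        · exact le_sup_right

end IsSplitFlags

end SplitFlags

lemma IsTridiagonalPair.congr_eigenvalues {A A' : Module.End K V} {d : ℕ}
    {Vs Vs' : ℤ → Submodule K V} {θ θ' θ₂ θ₂' : ℤ → K}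
    (h : IsTridiagonalPair A A' d Vs Vs' θ θ')
    (hθ : ∀ i : ℤ, 0 ≤ i → i ≤ (d : ℤ) → θ i = θ₂ i)
    (hθ' : ∀ i : ℤ, 0 ≤ i → i ≤ (d : ℤ) → θ' i = θ₂' i) :
    IsTridiagonalPair A A' d Vs Vs' θ₂ θ₂' where
  decompV := h.decompV
  decompV' := h.decompV'
  eig := h.decompV.apply_eq_smul fun i h₀ hd v hv => hθ i h₀ hd ▸ h.eig i v hv
  eig' := h.decompV'.apply_eq_smul fun i h₀ hd v hv => hθ' i h₀ hd ▸ h.eig' i v hv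
  theta_inj i j hi₀ hid hj₀ hjd e :=
    h.theta_inj i j hi₀ hid hj₀ hjd (by rwa [hθ i hi₀ hid, hθ j hj₀ hjd])
  theta'_inj i j hi₀ hid hj₀ hjd e :=
    h.theta'_inj i j hi₀ hid hj₀ hjd (by rwa [hθ' i hi₀ hid, hθ' j hj₀ hjd])
  trid := h.trid
  trid' := h.trid'
  irred := h.irred

section QPowers

variable {q c : K} (hq0 : q ≠ 0) (hq : ∀ n : ℕ, 0 < n → q ^ n ≠ 1) (hc : c ≠ 0)
include hq0 hq hc

lemma injective_mul_zpow : Function.Injective fun n : ℤ => c * q ^ n := by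
  have hu : ¬IsOfFinOrder (Units.mk0 q hq0) := by
    rw [isOfFinOrder_iff_pow_eq_one]
    rintro ⟨n, hn, hqn⟩
    exact hq n hn (by simpa [Units.ext_iff] using hqn)
  intro m n hmn
  exact injective_zpow_iff_not_isOfFinOrder.mpr hu (Units.ext (by simpa [hc] using hmn))

lemma injective_mul_zpow_two_mul_sub (d : ℕ) :
    Function.Injective fun i : ℤ => c * q ^ (2 * i - (d : ℤ)) :=
  (injective_mul_zpow hq0 hq hc).comp fun _ _ e => by simpa using e

lemma injective_mul_zpow_sub_two_mul (d : ℕ) :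
    Function.Injective fun i : ℤ => c * q ^ ((d : ℤ) - 2 * i) :=
  (injective_mul_zpow hq0 hq hc).comp fun _ _ e => by simpa using e

end QPowers

structure IsQGeometricTDPair (q a a' : K) (A A' : Module.End K V) (d : ℕ)
    (Vs Vs' : ℤ → Submodule K V) : Prop extends IsTridiagonalPair A A' d Vs Vs'
      (fun i => a * q ^ (2 * i - (d : ℤ))) (fun i => a' * q ^ ((d : ℤ) - 2 * i)) where
  q_ne_zero : q ≠ 0
  pow_ne_one : ∀ n : ℕ, 0 < n → q ^ n ≠ 1
  a_ne_zero : a ≠ 0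
  a'_ne_zero : a' ≠ 0

namespace IsQGeometricTDPair

variable {q a a' : K} {A A' : Module.End K V} {d : ℕ} {Vs Vs' : ℤ → Submodule K V}
  (h : IsQGeometricTDPair q a a' A A' d Vs Vs')
include h

lemma eigenspace_A (k : ℤ) : A.eigenspace (a * q ^ (2 * k - (d : ℤ))) = Vs k :=
  eigenspace_eq_of_injective h.decompV.sup_eq_top
    (injective_mul_zpow_two_mul_sub h.q_ne_zero h.pow_ne_one h.a_ne_zero d)
    h.eig k

lemma eigenspace_A' (k : ℤ) : A'.eigenspace (a' * q ^ ((d : ℤ) - 2 * k)) = Vs' k :=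
  eigenspace_eq_of_injective h.decompV'.sup_eq_top
    (injective_mul_zpow_sub_two_mul h.q_ne_zero h.pow_ne_one h.a'_ne_zero d)
    h.eig' k

lemma isSplitFlags_dec0s0 :
    IsSplitFlags A' A (fun i => a' * q ^ ((d : ℤ) - 2 * i))
      (fun i => a * q ^ ((d : ℤ) - 2 * i)) d
      (fun i => sumIcc Vs' 0 i) (fun i => sumIcc Vs 0 ((d : ℤ) - i)) where
  irreducible W hS hT := h.irred W hT hS
  monotone _ _ hij := sumIcc_mono le_rfl hij
  antitone _ _ hij := sumIcc_mono le_rfl (by omega)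
  X_neg_one := sumIcc_eq_bot_of_lt (by omega)
  Y_zero := h.decompV.sumIcc_eq_top le_rfl (by omega)
  Y_d_add_one := sumIcc_eq_bot_of_lt (by omega)
  Y_one_ne_top := by
    simpa [h.decompV.sumIcc_eq_top le_rfl le_rfl] using
      h.decompV.sumIcc_pred_ne (Int.natCast_nonneg d) le_rfl
  X_pred_ne _ h₀ hd := h.decompV'.sumIcc_pred_ne h₀ hd
  sub_smul_mem_X _ _ hv := sub_smul_mem_sumIcc_pred h.eig' hv
  map_X _ := h.decompV'.map_sumIcc_le_of_tridiagonal h.trid' (Or.inr le_rfl) (Or.inl le_rfl)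
  sub_smul_mem_Y i v hv := by
    have := sub_smul_mem_sumIcc_pred h.eig hv
    rwa [show 2 * ((d : ℤ) - i) - d = d - 2 * i by ring, sub_sub] at this
  map_Y _ := h.decompV.map_sumIcc_le_of_tridiagonal h.trid (Or.inr le_rfl) (Or.inl (by omega))

lemma isSplitFlags_decDsD :
    IsSplitFlags A' A (fun i => a' * q ^ (2 * i - (d : ℤ)))
      (fun i => a * q ^ (2 * i - (d : ℤ))) d
      (fun i => sumIcc Vs' ((d : ℤ) - i) d) (fun i => sumIcc Vs i d) where
  irreducible W hS hT := h.irred W hT hS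
  monotone _ _ hij := sumIcc_mono (by omega) le_rfl
  antitone _ _ hij := sumIcc_mono hij le_rfl
  X_neg_one := sumIcc_eq_bot_of_lt (by omega)
  Y_zero := h.decompV.sumIcc_eq_top le_rfl le_rfl
  Y_d_add_one := sumIcc_eq_bot_of_lt (by omega)
  Y_one_ne_top := by
    simpa [h.decompV.sumIcc_eq_top le_rfl le_rfl] using
      h.decompV.sumIcc_succ_ne le_rfl (Int.natCast_nonneg d)
  X_pred_ne i h₀ hd := by
    rw [show (d : ℤ) - (i - 1) = d - i + 1 by ring]
    exact h.decompV'.sumIcc_succ_ne (by omega) (by omega)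
  sub_smul_mem_X i v hv := by
    have := sub_smul_mem_sumIcc_succ h.eig' hv
    rwa [show (d : ℤ) - 2 * (d - i) = 2 * i - d by ring,
      show (d : ℤ) - i + 1 = d - (i - 1) by ring] at this
  map_X _ := h.decompV'.map_sumIcc_le_of_tridiagonal h.trid' (Or.inl (by omega)) (Or.inr le_rfl)
  sub_smul_mem_Y _ _ hv := sub_smul_mem_sumIcc_succ h.eig hv
  map_Y _ := h.decompV.map_sumIcc_le_of_tridiagonal h.trid (Or.inl le_rfl) (Or.inr le_rfl)

lemma isDecomposition_dec0s0 : IsDecomposition d (dec0s0 d Vs Vs') :=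
  h.isSplitFlags_dec0s0.isDecomposition

lemma isDecomposition_decDsD : IsDecomposition d (decDsD d Vs Vs') :=
  h.isSplitFlags_decDsD.isDecomposition

lemma sumIcc_dec0s0_zero (i : ℤ) : sumIcc (dec0s0 d Vs Vs') 0 i = sumIcc Vs' 0 i :=
  h.isSplitFlags_dec0s0.sumIcc_zero_eq_X i

lemma sumIcc_dec0s0_d (i : ℤ) : sumIcc (dec0s0 d Vs Vs') i d = sumIcc Vs 0 ((d : ℤ) - i) :=
  h.isSplitFlags_dec0s0.sumIcc_d_eq_Y i

lemma sumIcc_decDsD_zero (i : ℤ) : sumIcc (decDsD d Vs Vs') 0 i = sumIcc Vs' ((d : ℤ) - i) d :=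
  h.isSplitFlags_decDsD.sumIcc_zero_eq_X i

lemma sumIcc_decDsD_d (i : ℤ) : sumIcc (decDsD d Vs Vs') i d = sumIcc Vs i d :=
  h.isSplitFlags_decDsD.sumIcc_d_eq_Y i

lemma map_Vs_le_of_comm {E : Module.End K V} {x y c : K}
    (hcomm : x • (E * A) - y • (A * E) = c • 1) (hy : y ≠ 0) {e : ℤ} (he : e ≠ 0)
    (hxy : y * q ^ (2 * e) = x) (j : ℤ) : (Vs j).map E ≤ Vs j ⊔ Vs (j + e) := by
  have := map_eigenspace_le_of_comm hcomm hy (μ := a * q ^ (2 * j - (d : ℤ)))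
    (ν := a * q ^ (2 * (j + e) - (d : ℤ))) ?_ fun hμν => he ?_
  · rwa [h.eigenspace_A, h.eigenspace_A] at this
  · rw [← hxy, show 2 * (j + e) - (d : ℤ) = 2 * j - d + 2 * e by ring, zpow_add₀ h.q_ne_zero]
    ring
  · have := injective_mul_zpow_two_mul_sub h.q_ne_zero h.pow_ne_one h.a_ne_zero d hμν
    omega

lemma map_Vs'_le_of_comm {E : Module.End K V} {x y c : K}
    (hcomm : x • (E * A') - y • (A' * E) = c • 1) (hy : y ≠ 0) {e : ℤ} (he : e ≠ 0)
    (hxy : y * q ^ (-(2 * e)) = x) (j : ℤ) : (Vs' j).map E ≤ Vs' j ⊔ Vs' (j + e) := by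
  have := map_eigenspace_le_of_comm hcomm hy (μ := a' * q ^ ((d : ℤ) - 2 * j))
    (ν := a' * q ^ ((d : ℤ) - 2 * (j + e))) ?_ fun hμν => he ?_
  · rwa [h.eigenspace_A', h.eigenspace_A'] at this
  · rw [← hxy, show (d : ℤ) - 2 * (j + e) = d - 2 * j + -(2 * e) by ring,
      zpow_add₀ h.q_ne_zero]
    ring
  · have := injective_mul_zpow_sub_two_mul h.q_ne_zero h.pow_ne_one h.a'_ne_zero d hμν
    omega

section B

variable {b : K} {B : Module.End K V}
  (hB : ∀ i : ℤ, ∀ v ∈ dec0s0 d Vs Vs' i, B v = (b * q ^ (2 * i - (d : ℤ))) • v)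
include hB

lemma comm_B_A : q⁻¹ • (B * A) - q • (A * B) = ((q⁻¹ - q) * (a * b)) • 1 :=
  comm_eq_smul_one h.isDecomposition_dec0s0.sup_eq_top hB
    (fun _ _ hv => h.isSplitFlags_dec0s0.sub_smul_mem_inf_succ hv)
    (fun i => by
      rw [show (d : ℤ) - 2 * i = -(2 * i - d) by ring, zpow_neg]
      field_simp [zpow_ne_zero _ h.q_ne_zero])
    (fun i => by
      rw [show 2 * (i + 1) - (d : ℤ) = 2 * i - d + 2 by ring, zpow_add₀ h.q_ne_zero]
      field_simp)

lemma comm_B_A' : q • (B * A') - q⁻¹ • (A' * B) = ((q - q⁻¹) * (a' * b)) • 1 :=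
  comm_eq_smul_one (e := -1) h.isDecomposition_dec0s0.sup_eq_top hB
    (fun _ _ hv => h.isSplitFlags_dec0s0.sub_smul_mem_inf_pred hv)
    (fun i => by
      rw [show (d : ℤ) - 2 * i = -(2 * i - d) by ring, zpow_neg]
      field_simp [zpow_ne_zero _ h.q_ne_zero])
    (fun i => by
      rw [show 2 * i - (d : ℤ) = 2 * (i + -1) - d + 2 by ring, zpow_add₀ h.q_ne_zero]
      field_simp)

lemma map_B_Vs (j : ℤ) : (Vs j).map B ≤ Vs (j - 1) ⊔ Vs j := by
  have := h.map_Vs_le_of_comm (h.comm_B_A hB) h.q_ne_zero (e := -1) (by norm_num)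
    (by norm_num [zpow_neg]; field_simp [h.q_ne_zero]) j
  rwa [← sub_eq_add_neg, sup_comm] at this

lemma map_B_Vs' (j : ℤ) : (Vs' j).map B ≤ Vs' (j - 1) ⊔ Vs' j := by
  have := h.map_Vs'_le_of_comm (h.comm_B_A' hB) (inv_ne_zero h.q_ne_zero) (e := -1) (by norm_num)
    (by norm_num; field_simp [h.q_ne_zero]) j
  rwa [← sub_eq_add_neg, sup_comm] at this

lemma map_B_decDsD (i : ℤ) : (decDsD d Vs Vs' i).map B ≤
    decDsD d Vs Vs' (i - 1) ⊔ decDsD d Vs Vs' i ⊔ decDsD d Vs Vs' (i + 1) :=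
  h.isSplitFlags_decDsD.map_inf_le_sup_of_map_le
    (fun _ => h.decompV'.map_sumIcc_le_of_tridiagonal
      (fun j => (h.map_B_Vs' hB j).trans le_sup_left) (Or.inl (by omega)) (Or.inr le_rfl))
    (fun _ => h.decompV.map_sumIcc_le_of_tridiagonal
      (fun j => (h.map_B_Vs hB j).trans le_sup_left) (Or.inl le_rfl) (Or.inr le_rfl)) i

end B

section B'

variable {b' : K} {B' : Module.End K V}
  (hB' : ∀ i : ℤ, ∀ v ∈ decDsD d Vs Vs' i, B' v = (b' * q ^ ((d : ℤ) - 2 * i)) • v)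
include hB'

lemma comm_B'_A : q • (B' * A) - q⁻¹ • (A * B') = ((q - q⁻¹) * (a * b')) • 1 :=
  comm_eq_smul_one h.isDecomposition_decDsD.sup_eq_top hB'
    (fun _ _ hv => h.isSplitFlags_decDsD.sub_smul_mem_inf_succ hv)
    (fun i => by
      rw [show (d : ℤ) - 2 * i = -(2 * i - d) by ring, zpow_neg]
      field_simp [zpow_ne_zero _ h.q_ne_zero])
    (fun i => by
      rw [show (d : ℤ) - 2 * i = d - 2 * (i + 1) + 2 by ring, zpow_add₀ h.q_ne_zero]
      field_simp)

lemma comm_B'_A' : q⁻¹ • (B' * A') - q • (A' * B') = ((q⁻¹ - q) * (a' * b')) • 1 :=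
  comm_eq_smul_one (e := -1) h.isDecomposition_decDsD.sup_eq_top hB'
    (fun _ _ hv => h.isSplitFlags_decDsD.sub_smul_mem_inf_pred hv)
    (fun i => by
      rw [show (d : ℤ) - 2 * i = -(2 * i - d) by ring, zpow_neg]
      field_simp [zpow_ne_zero _ h.q_ne_zero])
    (fun i => by
      rw [show (d : ℤ) - 2 * (i + -1) = d - 2 * i + 2 by ring, zpow_add₀ h.q_ne_zero]
      field_simp)

lemma map_B'_Vs (j : ℤ) : (Vs j).map B' ≤ Vs j ⊔ Vs (j + 1) :=
  h.map_Vs_le_of_comm (h.comm_B'_A hB') (inv_ne_zero h.q_ne_zero) one_ne_zero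
    (by norm_num; field_simp [h.q_ne_zero]) j

lemma map_B'_Vs' (j : ℤ) : (Vs' j).map B' ≤ Vs' j ⊔ Vs' (j + 1) :=
  h.map_Vs'_le_of_comm (h.comm_B'_A' hB') h.q_ne_zero one_ne_zero
    (by norm_num [zpow_neg]; field_simp [h.q_ne_zero]) j

lemma map_B'_dec0s0 (i : ℤ) : (dec0s0 d Vs Vs' i).map B' ≤
    dec0s0 d Vs Vs' (i - 1) ⊔ dec0s0 d Vs Vs' i ⊔ dec0s0 d Vs Vs' (i + 1) :=
  h.isSplitFlags_dec0s0.map_inf_le_sup_of_map_le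
    (fun _ => h.decompV'.map_sumIcc_le_of_tridiagonal
      (fun j => (h.map_B'_Vs' hB' j).trans (sup_le_sup_right le_sup_right _))
      (Or.inr le_rfl) (Or.inl le_rfl))
    (fun _ => h.decompV.map_sumIcc_le_of_tridiagonal
      (fun j => (h.map_B'_Vs hB' j).trans (sup_le_sup_right le_sup_right _))
      (Or.inr le_rfl) (Or.inl (by omega))) i

end B'

section Irreducible

variable [FiniteDimensional K V] {W : Submodule K V}
  (hU : W ≤ ⨆ i, W ⊓ dec0s0 d Vs Vs' i) (hU' : W ≤ ⨆ i, W ⊓ decDsD d Vs Vs' i)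
include hU hU'

lemma map_A_le : W.map A ≤ W := by
  refine map_le_of_le_iSup_inf h.eig (h.decompV.le_iSup_inf fun l _ _ => ?_)
  refine le_inf_sup_inf_of_disjoint
    (M₂ := sumIcc Vs' 0 (d - l - 1)) (N₁ := sumIcc Vs' (d - l) d)
    ?_ ?_ (h.decompV.disjoint_sumIcc (lt_add_one l)) (h.decompV'.disjoint_sumIcc (by omega))
  · have := h.isDecomposition_dec0s0.le_inf_sumIcc_sup hU (d - l - 1)
    rwa [h.sumIcc_dec0s0_zero, h.sumIcc_dec0s0_d, sup_comm,
      show (d : ℤ) - (d - l - 1 + 1) = l by ring] at this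
  · have := h.isDecomposition_decDsD.le_inf_sumIcc_sup hU' l
    rwa [h.sumIcc_decDsD_zero, h.sumIcc_decDsD_d] at this

lemma map_A'_le : W.map A' ≤ W := by
  refine map_le_of_le_iSup_inf h.eig' (h.decompV'.le_iSup_inf fun l _ _ => ?_)
  refine le_inf_sup_inf_of_disjoint
    (M₂ := sumIcc Vs 0 (d - (l + 1))) (N₁ := sumIcc Vs (d - l) d)
    ?_ ?_ (h.decompV'.disjoint_sumIcc (lt_add_one l)) (h.decompV.disjoint_sumIcc (by omega))
  · have := h.isDecomposition_dec0s0.le_inf_sumIcc_sup hU l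
    rwa [h.sumIcc_dec0s0_zero, h.sumIcc_dec0s0_d] at this
  · have := h.isDecomposition_decDsD.le_inf_sumIcc_sup hU' (d - l - 1)
    rwa [h.sumIcc_decDsD_zero, h.sumIcc_decDsD_d, sup_comm,
      show (d : ℤ) - (d - l - 1) = l + 1 by ring,
      show (d : ℤ) - l - 1 + 1 = d - l by ring] at this

end Irreducible

lemma irreducible_B_B' [FiniteDimensional K V] {b b' : K} {B B' : Module.End K V}
    (hB : ∀ i : ℤ, ∀ v ∈ dec0s0 d Vs Vs' i, B v = (b * q ^ (2 * i - (d : ℤ))) • v)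
    (hB' : ∀ i : ℤ, ∀ v ∈ decDsD d Vs Vs' i, B' v = (b' * q ^ ((d : ℤ) - 2 * i)) • v)
    (hb : b ≠ 0) (hb' : b' ≠ 0) (W : Submodule K V) (hWB : W.map B ≤ W)
    (hWB' : W.map B' ≤ W) :
    W = ⊥ ∨ W = ⊤ := by
  have hU := le_iSup_inf_of_map_le h.isDecomposition_dec0s0.sup_eq_top
    (injective_mul_zpow_two_mul_sub h.q_ne_zero h.pow_ne_one hb d) hB hWB
  have hU' := le_iSup_inf_of_map_le h.isDecomposition_decDsD.sup_eq_top
    (injective_mul_zpow_sub_two_mul h.q_ne_zero h.pow_ne_one hb' d) hB' hWB'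
  exact h.irred W (h.map_A_le hU hU') (h.map_A'_le hU hU')

end IsQGeometricTDPair

theorem stmt7_general {K : Type*} [Field K]
    {V : Type*} [AddCommGroup V] [Module K V] [FiniteDimensional K V]
    (q : K) (hq0 : q ≠ 0) (hq : ∀ n : ℕ, 0 < n → q ^ n ≠ 1)
    (A A' : Module.End K V) (d : ℕ) (Vs Vs' : ℤ → Submodule K V) (θ θ' : ℤ → K)
    (hTD : IsTridiagonalPair A A' d Vs Vs' θ θ')
    (a a' : K) (ha : a ≠ 0) (ha' : a' ≠ 0)
    (hθ : ∀ i : ℤ, 0 ≤ i → i ≤ (d : ℤ) → θ i = a * q ^ (2 * i - (d : ℤ)))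
    (hθ' : ∀ i : ℤ, 0 ≤ i → i ≤ (d : ℤ) → θ' i = a' * q ^ ((d : ℤ) - 2 * i))
    (b b' : K) (hb : b ≠ 0) (hb' : b' ≠ 0)
    (B : Module.End K V)
    (hB : ∀ i : ℤ, 0 ≤ i → i ≤ (d : ℤ) → ∀ v ∈ dec0s0 d Vs Vs' i,
      B v = (b * q ^ (2 * i - (d : ℤ))) • v)
    (B' : Module.End K V)
    (hB' : ∀ i : ℤ, 0 ≤ i → i ≤ (d : ℤ) → ∀ v ∈ decDsD d Vs Vs' i,
      B' v = (b' * q ^ ((d : ℤ) - 2 * i)) • v)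
    :
    ∃ Us Us' : ℤ → Submodule K V,
      IsTridiagonalPair B B' d Us Us'
        (fun i => b * q ^ (2 * i - (d : ℤ))) (fun i => b' * q ^ ((d : ℤ) - 2 * i)) := by
  have h : IsQGeometricTDPair q a a' A A' d Vs Vs' :=
    ⟨hTD.congr_eigenvalues hθ hθ', hq0, hq, ha, ha'⟩
  have hBU := h.isDecomposition_dec0s0.apply_eq_smul hB
  have hB'U := h.isDecomposition_decDsD.apply_eq_smul hB'
  exact ⟨dec0s0 d Vs Vs', decDsD d Vs Vs',
    { decompV := h.isDecomposition_dec0s0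
      decompV' := h.isDecomposition_decDsD
      eig := hBU
      eig' := hB'U
      theta_inj := fun _ _ _ _ _ _ e => injective_mul_zpow_two_mul_sub hq0 hq hb d e
      theta'_inj := fun _ _ _ _ _ _ e => injective_mul_zpow_sub_two_mul hq0 hq hb' d e
      trid := h.map_B'_dec0s0 hB'U
      trid' := h.map_B_decDsD hBU
      irred := h.irreducible_B_B' hBU hB'U hb hb' }⟩

/-- `B, B*` is a tridiagonal pair on `V`, with standard eigenvalue
orderings `b q^{2i−d}` and `b* q^{d−2i}`. -/
theorem stmt7 {K : Type*} [Field K] [IsAlgClosed K]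
    {V : Type*} [AddCommGroup V] [Module K V] [FiniteDimensional K V] [Nontrivial V]
    (q : K) (hq0 : q ≠ 0) (hq : ∀ n : ℕ, 0 < n → q ^ n ≠ 1)
    (A A' : Module.End K V) (d : ℕ) (Vs Vs' : ℤ → Submodule K V) (θ θ' : ℤ → K)
    (hTD : IsTridiagonalPair A A' d Vs Vs' θ θ')
    (a a' : K) (ha : a ≠ 0) (ha' : a' ≠ 0)
    (hθ : ∀ i : ℤ, 0 ≤ i → i ≤ (d : ℤ) → θ i = a * q ^ (2 * i - (d : ℤ)))
    (hθ' : ∀ i : ℤ, 0 ≤ i → i ≤ (d : ℤ) → θ' i = a' * q ^ ((d : ℤ) - 2 * i))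
    (b b' : K) (hb : b ≠ 0) (hb' : b' ≠ 0)
    (B : Module.End K V)
    (hB : ∀ i : ℤ, 0 ≤ i → i ≤ (d : ℤ) → ∀ v ∈ dec0s0 d Vs Vs' i,
      B v = (b * q ^ (2 * i - (d : ℤ))) • v)
    (B' : Module.End K V)
    (hB' : ∀ i : ℤ, 0 ≤ i → i ≤ (d : ℤ) → ∀ v ∈ decDsD d Vs Vs' i,
      B' v = (b' * q ^ ((d : ℤ) - 2 * i)) • v)
    :
    ∃ Us Us' : ℤ → Submodule K V,
      IsTridiagonalPair B B' d Us Us'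
        (fun i => b * q ^ (2 * i - (d : ℤ))) (fun i => b' * q ^ ((d : ℤ) - 2 * i)) :=
  stmt7_general q hq0 hq A A' d Vs Vs' θ θ' hTD a a' ha ha' hθ hθ' b b' hb hb' B hB B' hB'
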